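/- arXiv:1609.05766 — 7 statements merged into one kernel-verified Lean document; each statement's English description precedes it below -/
import Mathlib

section
/- Let G be a group, K a subgroup of G, and k an element of K that commutes with every element of K. Then the binary operation on the left coset space K\G defined by [Kx] ◁ [Ky] = [K x y⁻¹ k y] is well-defined (independent of the chosen coset representatives x and y). -/
/-- well-definedness of the coset quandle operation
`[Kx] ◁ [Ky] = [K x y⁻¹ k y]` on the right coset space `K\G`,
where `k ∈ K` commutes with every element of `K`. -/
theorem stmt0 {G : Type*} [Group G] (K : Subgroup G) (k : G)
    (hk : k ∈ K) (hcomm : ∀ h ∈ K, k * h = h * k)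
    (x x' y y' : G) (hx : x * x'⁻¹ ∈ K) (hy : y * y'⁻¹ ∈ K) :
    (x * y⁻¹ * k * y) * (x' * y'⁻¹ * k * y')⁻¹ ∈ K := by
  have h := hcomm _ hy
  have h' : y⁻¹ * k * y = y'⁻¹ * k * y' := by
    have := congrArg (fun g => y⁻¹ * g * y') h
    simpa [mul_assoc] using this
  have key : (x * y⁻¹ * k * y) * (x' * y'⁻¹ * k * y')⁻¹ = x * x'⁻¹ := by
    rw [mul_assoc x, mul_assoc x, h']
    group
  rw [key]; exact hx
end

section
/- Let G be a group, K a subgroup, and k ∈ K an element commuting with every element of K. Then the coset space K\G with operation [Kx] ◁ [Ky] = [K x y⁻¹ k y] is a quandle: (I) a ◁ a = a for all a; (II) for each a, the map x ↦ x ◁ a is a bijection; (III) (a ◁ b) ◁ c = (a ◁ c) ◁ (b ◁ c) for all a, b, c. -/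
/-- the right coset space `K\G` with operation
`[Kx] ◁ [Ky] = [K x y⁻¹ k y]` is a quandle, when `k ∈ K` commutes with all of `K`. -/
theorem stmt1 {G : Type*} [Group G] (K : Subgroup G) (k : G)
    (hk : k ∈ K) (hcomm : ∀ h ∈ K, k * h = h * k) :
    ∃ op : Quotient (QuotientGroup.rightRel K) → Quotient (QuotientGroup.rightRel K) →
        Quotient (QuotientGroup.rightRel K),
      (∀ x y : G, op (Quotient.mk (QuotientGroup.rightRel K) x)
          (Quotient.mk (QuotientGroup.rightRel K) y) =
          Quotient.mk (QuotientGroup.rightRel K) (x * y⁻¹ * k * y)) ∧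
      (∀ a, op a a = a) ∧
      (∀ a, Function.Bijective (fun x => op x a)) ∧
      (∀ a b c, op (op a b) c = op (op a c) (op b c)) := by
  have hresp : ∀ a₁ b₁ a₂ b₂ : G,
      QuotientGroup.rightRel K a₁ a₂ →
      QuotientGroup.rightRel K b₁ b₂ →
      QuotientGroup.rightRel K (a₁ * b₁⁻¹ * k * b₁) (a₂ * b₂⁻¹ * k * b₂) := by
    intro a₁ b₁ a₂ b₂ ha hb
    rw [QuotientGroup.rightRel_apply] at ha hb ⊢
    have hc := hcomm _ hb
    have e : (a₂ * b₂⁻¹ * k * b₂) * (a₁ * b₁⁻¹ * k * b₁)⁻¹ =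
        (a₂ * a₁⁻¹) * (a₁ * (b₂⁻¹ * (k * (b₂ * b₁⁻¹) * k⁻¹) * b₁) * a₁⁻¹) := by
      group
    rw [hc] at e
    have e2 : (a₂ * b₂⁻¹ * k * b₂) * (a₁ * b₁⁻¹ * k * b₁)⁻¹ = a₂ * a₁⁻¹ := by
      rw [e]; group
    rw [e2]; exact ha
  refine ⟨Quotient.map₂ (fun x y => x * y⁻¹ * k * y)
    (fun a₁ a₂ ha b₁ b₂ hb => hresp a₁ b₁ a₂ b₂ ha hb), fun x y => rfl, ?_, ?_, ?_⟩
  · -- idempotence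
    intro a
    induction a using Quotient.ind with
    | _ x =>
      show Quotient.mk _ (x * x⁻¹ * k * x) = Quotient.mk _ x
      apply Quotient.sound
      refine QuotientGroup.rightRel_apply.mpr ?_
      have : x * (x * x⁻¹ * k * x)⁻¹ = k⁻¹ := by group
      rw [this]; exact inv_mem hk
  · -- bijectivity
    intro a
    induction a using Quotient.ind with
    | _ y =>
      constructor
      · intro p q hpq
        induction p using Quotient.ind with
        | _ x₁ =>
        induction q using Quotient.ind with
        | _ x₂ =>
          simp only [Quotient.map₂_mk] at hpq
          apply Quotient.sound
          have h := QuotientGroup.rightRel_apply.mp (Quotient.exact hpq)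
          refine QuotientGroup.rightRel_apply.mpr ?_
          have e : (x₂ * y⁻¹ * k * y) * (x₁ * y⁻¹ * k * y)⁻¹ = x₂ * x₁⁻¹ := by group
          rwa [e] at h
      · intro z
        induction z using Quotient.ind with
        | _ z₀ =>
          refine ⟨Quotient.mk _ (z₀ * y⁻¹ * k⁻¹ * y), ?_⟩
          show Quotient.mk _ (z₀ * y⁻¹ * k⁻¹ * y * y⁻¹ * k * y) = Quotient.mk _ z₀
          apply congrArg
          group
  · -- self-distributivity
    intro a b c
    induction a using Quotient.ind with
    | _ x =>
    induction b using Quotient.ind with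
    | _ y =>
    induction c using Quotient.ind with
    | _ z =>
      show Quotient.mk _ ((x * y⁻¹ * k * y) * z⁻¹ * k * z) =
        Quotient.mk _ ((x * z⁻¹ * k * z) * (y * z⁻¹ * k * z)⁻¹ * k * (y * z⁻¹ * k * z))
      apply congrArg
      group
end

section
/- The set X = (ℂ² \ {(0,0)}) / ((a,b) ∼ (−a,−b)) with the operation (a,b) ◁ (c,d) = (a(1+cd) − bc², ad² + b(1−cd)) is a quandle: the operation is well-defined on equivalence classes, idempotent, right-invertible, and right self-distributive. -/
/-- The binary operation `(a,b) ◁ (c,d) = (a,b)·[[1+cd, d²],[−c², 1−cd]]` on `ℂ²`. -/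
def stmt2Op (v w : ℂ × ℂ) : ℂ × ℂ :=
  (v.1 * (1 + w.1 * w.2) - v.2 * w.1 ^ 2, v.1 * w.2 ^ 2 + v.2 * (1 - w.1 * w.2))

/-- The relation identifying `v` with `−v` on `ℂ² \ {0}`. -/
def stmt2Rel (v w : {p : ℂ × ℂ // p ≠ 0}) : Prop := (w : ℂ × ℂ) = -(v : ℂ × ℂ)

/-- The inverse operation (multiplication by the inverse matrix). -/
def stmt2Inv (v w : ℂ × ℂ) : ℂ × ℂ :=
  (v.1 * (1 - w.1 * w.2) + v.2 * w.1 ^ 2, -(v.1 * w.2 ^ 2) + v.2 * (1 + w.1 * w.2))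

lemma stmt2Op_ne (v w : ℂ × ℂ) (hv : v ≠ 0) : stmt2Op v w ≠ 0 := by
  intro h
  apply hv
  rw [Prod.ext_iff] at h ⊢
  obtain ⟨h1, h2⟩ := h
  simp only [stmt2Op, Prod.fst_zero, Prod.snd_zero] at h1 h2 ⊢
  constructor
  · linear_combination (1 - w.1 * w.2) * h1 + w.1 ^ 2 * h2
  · linear_combination (-(w.2 ^ 2)) * h1 + (1 + w.1 * w.2) * h2

lemma stmt2Inv_ne (v w : ℂ × ℂ) (hv : v ≠ 0) : stmt2Inv v w ≠ 0 := by
  intro h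
  apply hv
  rw [Prod.ext_iff] at h ⊢
  obtain ⟨h1, h2⟩ := h
  simp only [stmt2Inv, Prod.fst_zero, Prod.snd_zero] at h1 h2 ⊢
  constructor
  · linear_combination (1 + w.1 * w.2) * h1 - w.1 ^ 2 * h2
  · linear_combination (w.2 ^ 2) * h1 + (1 - w.1 * w.2) * h2

lemma stmt2Op_neg_right (v w : ℂ × ℂ) : stmt2Op v (-w) = stmt2Op v w := by
  simp only [stmt2Op, Prod.fst_neg, Prod.snd_neg]; ring_nf

lemma stmt2Op_neg_left (v w : ℂ × ℂ) : stmt2Op (-v) w = -stmt2Op v w := by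
  simp only [stmt2Op, Prod.fst_neg, Prod.snd_neg, Prod.neg_mk]; ring_nf

lemma stmt2Inv_neg_right (v w : ℂ × ℂ) : stmt2Inv v (-w) = stmt2Inv v w := by
  simp only [stmt2Inv, Prod.fst_neg, Prod.snd_neg]; ring_nf

lemma stmt2Inv_neg_left (v w : ℂ × ℂ) : stmt2Inv (-v) w = -stmt2Inv v w := by
  simp only [stmt2Inv, Prod.fst_neg, Prod.snd_neg, Prod.neg_mk]; ring_nf

/-- The operation descended to the quotient. -/
def stmt2QOp : Quot stmt2Rel → Quot stmt2Rel → Quot stmt2Rel :=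
  Quot.lift₂
    (fun v w => Quot.mk stmt2Rel ⟨stmt2Op v.1 w.1, stmt2Op_ne v.1 w.1 v.2⟩)
    (by
      rintro v w₁ w₂ (h : (w₂ : ℂ × ℂ) = -(w₁ : ℂ × ℂ))
      refine congrArg (Quot.mk stmt2Rel) (Subtype.ext ?_)
      show stmt2Op _ (w₁ : ℂ × ℂ) = stmt2Op _ (w₂ : ℂ × ℂ)
      rw [h, stmt2Op_neg_right])
    (by
      rintro v₁ v₂ w (h : (v₂ : ℂ × ℂ) = -(v₁ : ℂ × ℂ))
      apply Quot.sound
      show stmt2Op (v₂ : ℂ × ℂ) _ = -stmt2Op (v₁ : ℂ × ℂ) _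
      rw [h, stmt2Op_neg_left])

/-- The inverse operation descended to the quotient. -/
def stmt2QInv : Quot stmt2Rel → Quot stmt2Rel → Quot stmt2Rel :=
  Quot.lift₂
    (fun v w => Quot.mk stmt2Rel ⟨stmt2Inv v.1 w.1, stmt2Inv_ne v.1 w.1 v.2⟩)
    (by
      rintro v w₁ w₂ (h : (w₂ : ℂ × ℂ) = -(w₁ : ℂ × ℂ))
      refine congrArg (Quot.mk stmt2Rel) (Subtype.ext ?_)
      show stmt2Inv _ (w₁ : ℂ × ℂ) = stmt2Inv _ (w₂ : ℂ × ℂ)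
      rw [h, stmt2Inv_neg_right])
    (by
      rintro v₁ v₂ w (h : (v₂ : ℂ × ℂ) = -(v₁ : ℂ × ℂ))
      apply Quot.sound
      show stmt2Inv (v₂ : ℂ × ℂ) _ = -stmt2Inv (v₁ : ℂ × ℂ) _
      rw [h, stmt2Inv_neg_left])

lemma stmt2_inv_op (v w : ℂ × ℂ) : stmt2Inv (stmt2Op v w) w = v := by
  simp only [stmt2Op, stmt2Inv, Prod.ext_iff]
  constructor <;> ring

lemma stmt2_op_inv (v w : ℂ × ℂ) : stmt2Op (stmt2Inv v w) w = v := by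
  simp only [stmt2Op, stmt2Inv, Prod.ext_iff]
  constructor <;> ring

lemma stmt2_idem (v : ℂ × ℂ) : stmt2Op v v = v := by
  simp only [stmt2Op, Prod.ext_iff]
  constructor <;> ring

lemma stmt2_distrib (v w u : ℂ × ℂ) :
    stmt2Op (stmt2Op v w) u = stmt2Op (stmt2Op v u) (stmt2Op w u) := by
  simp only [stmt2Op, Prod.ext_iff]
  constructor <;> ring

/-- `X = (ℂ² \ {0})/±` with the above operation is a quandle:
well-defined on equivalence classes, idempotent, right-invertible,
and right self-distributive. -/
theorem stmt2 :
    ∃ hne : ∀ v w : ℂ × ℂ, v ≠ 0 → w ≠ 0 → stmt2Op v w ≠ 0,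
    ∃ op : Quot stmt2Rel → Quot stmt2Rel → Quot stmt2Rel,
      (∀ (v w : ℂ × ℂ) (hv : v ≠ 0) (hw : w ≠ 0),
        op (Quot.mk stmt2Rel ⟨v, hv⟩) (Quot.mk stmt2Rel ⟨w, hw⟩) =
          Quot.mk stmt2Rel ⟨stmt2Op v w, hne v w hv hw⟩) ∧
      (∀ a, op a a = a) ∧
      (∀ a, Function.Bijective (fun x => op x a)) ∧
      (∀ a b c, op (op a b) c = op (op a c) (op b c)) := by
  refine ⟨fun v w hv _ => stmt2Op_ne v w hv, stmt2QOp, ?_, ?_, ?_, ?_⟩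
  · intro v w hv hw
    rfl
  · intro a
    induction a using Quot.ind with
    | _ v =>
      show Quot.mk _ _ = _
      congr 1
      exact Subtype.ext (stmt2_idem v.1)
  · intro a
    refine Function.bijective_iff_has_inverse.mpr ⟨fun x => stmt2QInv x a, ?_, ?_⟩
    · intro x
      induction a using Quot.ind with
      | _ w =>
        induction x using Quot.ind with
        | _ v =>
          show Quot.mk _ _ = _
          congr 1
          exact Subtype.ext (stmt2_inv_op v.1 w.1)
    · intro x
      induction a using Quot.ind with
      | _ w =>
        induction x using Quot.ind with
        | _ v =>
          show Quot.mk _ _ = _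
          congr 1
          exact Subtype.ext (stmt2_op_inv v.1 w.1)
  · intro a b c
    induction a using Quot.ind with
    | _ v =>
      induction b using Quot.ind with
      | _ w =>
        induction c using Quot.ind with
        | _ u =>
          show Quot.mk _ _ = Quot.mk _ _
          congr 1
          exact Subtype.ext (stmt2_distrib v.1 w.1 u.1)
end

section
/- Let M be a right ℤ[π]-module for a group π, and G = M ⋊ π the semidirect product. For g, h in any fixed conjugation orbit O ⊆ π and a, b ∈ M, the operation (a, g) ◁ (b, h) = ((a − b)·h + b, h⁻¹gh) defines a quandle structure on M × O. -/
/-- for a group `π`, a right `ℤ[π]`-module `M` (given by an additive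
right action `smul : M → π → M`), a conjugacy class `O = {g | IsConj g₀ g}` and the
operation `(a, g) ◁ (b, h) = ((a − b)·h + b, h⁻¹gh)`, the set `M × O` is a quandle. -/
theorem stmt6 {π : Type*} [Group π] {M : Type*} [AddCommGroup M]
    (smul : M → π → M)
    (hadd : ∀ (a b : M) (g : π), smul (a + b) g = smul a g + smul b g)
    (hmul : ∀ (a : M) (g h : π), smul a (g * h) = smul (smul a g) h)
    (hone : ∀ a : M, smul a 1 = a)
    (g₀ : π) :
    ∃ op : (M × {g : π // IsConj g₀ g}) → (M × {g : π // IsConj g₀ g}) →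
        (M × {g : π // IsConj g₀ g}),
      (∀ v w, (op v w).1 = smul (v.1 - w.1) (w.2 : π) + w.1 ∧
        ((op v w).2 : π) = (w.2 : π)⁻¹ * (v.2 : π) * (w.2 : π)) ∧
      (∀ a, op a a = a) ∧
      (∀ a, Function.Bijective (fun x => op x a)) ∧
      (∀ a b c, op (op a b) c = op (op a c) (op b c)) := by
  have hzero : ∀ g : π, smul 0 g = 0 := by
    intro g
    have := hadd 0 0 g
    simpa using this.symm
  have hneg : ∀ (a : M) (g : π), smul (-a) g = -smul a g := by
    intro a g
    have h := hadd a (-a) g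
    simp only [add_neg_cancel, hzero] at h
    exact (neg_eq_of_add_eq_zero_right h.symm).symm
  have hsub : ∀ (a b : M) (g : π), smul (a - b) g = smul a g - smul b g := by
    intro a b g
    rw [sub_eq_add_neg, hadd, hneg, sub_eq_add_neg]
  have hconj : ∀ (v w : {g : π // IsConj g₀ g}),
      IsConj g₀ ((w : π)⁻¹ * (v : π) * (w : π)) := by
    rintro ⟨v, hv⟩ ⟨w, hw⟩
    exact hv.trans (by rw [isConj_iff]; exact ⟨w⁻¹, by group⟩)
  refine ⟨fun v w => (smul (v.1 - w.1) (w.2 : π) + w.1,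
    ⟨(w.2 : π)⁻¹ * (v.2 : π) * (w.2 : π), hconj v.2 w.2⟩), fun v w => ⟨rfl, rfl⟩, ?_, ?_, ?_⟩
  · rintro ⟨a, g⟩
    ext
    · simp [hzero]
    · simp
  · rintro ⟨b, h⟩
    constructor
    · rintro ⟨a, g⟩ ⟨a', g'⟩ heq
      obtain ⟨h1, h2⟩ := Prod.mk.injEq .. ▸ heq
      simp only at h1 h2
      have hg : (g : π) = g' := by
        have := congrArg Subtype.val h2
        simp only at this
        have : (h : π) * ((h : π)⁻¹ * (g : π) * h) * (h:π)⁻¹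
            = (h : π) * ((h : π)⁻¹ * (g' : π) * h) * (h:π)⁻¹ := by rw [this]
        group at this
        simpa using this
      have ha : a = a' := by
        have h1' : smul (a - b) (h : π) = smul (a' - b) (h : π) := by
          have := congrArg (fun x => x - b) h1
          simpa using this
        have := congrArg (fun x => smul x (h : π)⁻¹) h1'
        simp only [← hmul, mul_inv_cancel, hone] at this
        exact sub_left_inj.mp this
      ext
      · exact ha
      · exact congrArg Subtype.val (Subtype.ext hg ▸ rfl : g = g') ▸ rfl
    · rintro ⟨c, k⟩
      refine ⟨(smul (c - b) (h : π)⁻¹ + b, ⟨(h : π) * (k : π) * (h : π)⁻¹, ?_⟩), ?_⟩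
      · exact k.2.trans (by rw [isConj_iff]; exact ⟨(h : π), by group⟩)
      · ext
        · show smul (smul (c - b) (h:π)⁻¹ + b - b) (h:π) + b = c
          rw [add_sub_cancel_right, ← hmul, inv_mul_cancel, hone, sub_add_cancel]
        · simp only []
          group
  · intro a b c
    apply Prod.ext
    · simp only [hsub, hadd, ← hmul]
      have e : (c.2:π) * ((c.2:π)⁻¹ * (b.2:π) * (c.2:π)) = (b.2:π) * (c.2:π) := by group
      rw [e]
      abel
    · apply Subtype.ext
      simp only []
      group
end

section
/- In the rack chain complex of a quandle X, the degenerate chains Cₙᴰ(X), generated by tuples (x₁,…,xₙ) with xᵢ = x_{i+1} for some i, form a subcomplex: ∂ᴿ_n(Cₙᴰ(X)) ⊆ C_{n−1}ᴰ(X). -/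
open Quandles

/-- The `i`-th face with action: `(x₁◁xᵢ, …, x_{i−1}◁xᵢ, x_{i+1}, …, xₙ)`. -/
def rackFaceAct {X : Type*} [Quandle X] {n : ℕ} (x : Fin (n + 1) → X)
    (i : Fin (n + 1)) : Fin n → X :=
  fun j => if (j : ℕ) < (i : ℕ) then x j.castSucc ◃ x i else x j.succ

/-- The `i`-th face without action: `(x₁, …, x_{i−1}, x_{i+1}, …, xₙ)`. -/
def rackFaceDel {X : Type*} [Quandle X] {n : ℕ} (x : Fin (n + 1) → X)
    (i : Fin (n + 1)) : Fin n → X :=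
  fun j => if (j : ℕ) < (i : ℕ) then x j.castSucc else x j.succ

/-- The rack boundary map on `Cₙᴿ(X) = ℤ[Xⁿ]`. -/
noncomputable def rackBoundary (X : Type*) [Quandle X] (n : ℕ)
    (f : (Fin (n + 1) → X) →₀ ℤ) : (Fin n → X) →₀ ℤ :=
  f.sum fun x c => c • ∑ i : Fin (n + 1), ((-1 : ℤ) ^ ((i : ℕ) + 1)) •
    (Finsupp.single (rackFaceAct x i) 1 - Finsupp.single (rackFaceDel x i) 1)

/-- Degenerate tuples: those with two equal adjacent entries. -/
def degTuple {X : Type*} (n : ℕ) : Set (Fin n → X) :=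
  {x | ∃ i j : Fin n, (i : ℕ) + 1 = (j : ℕ) ∧ x i = x j}

/-- The degenerate subgroup `Cₙᴰ(X) ⊆ Cₙᴿ(X)` spanned by degenerate tuples. -/
noncomputable def degSubmodule (X : Type*) (n : ℕ) : Submodule ℤ ((Fin n → X) →₀ ℤ) :=
  Submodule.span ℤ {g | ∃ x ∈ degTuple (X := X) n, g = Finsupp.single x 1}

/-- The image of a single degenerate tuple under the boundary. -/
noncomputable def rackTerm (X : Type*) [Quandle X] (n : ℕ) (x : Fin (n + 1) → X) :
    (Fin n → X) →₀ ℤ :=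
  ∑ i : Fin (n + 1), ((-1 : ℤ) ^ ((i : ℕ) + 1)) •
    (Finsupp.single (rackFaceAct x i) 1 - Finsupp.single (rackFaceDel x i) 1)

lemma deg_faces {X : Type*} [Quandle X] {n : ℕ} (x : Fin (n + 1) → X) (i j m : Fin (n + 1))
    (hij : (i : ℕ) + 1 = (j : ℕ)) (hxe : x i = x j)
    (hmi : (m : ℕ) ≠ (i : ℕ)) (hmj : (m : ℕ) ≠ (j : ℕ)) :
    rackFaceAct x m ∈ degTuple n ∧ rackFaceDel x m ∈ degTuple n := by
  have hjlt := j.isLt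
  have hmlt := m.isLt
  rcases lt_or_gt_of_ne hmi with hm | hm
  · -- m < i : the equal pair sits at positions i-1, i in the face
    have h1 : (i : ℕ) - 1 < n := by omega
    have h2 : (i : ℕ) < n := by omega
    set p : Fin n := ⟨(i : ℕ) - 1, h1⟩
    set q : Fin n := ⟨(i : ℕ), h2⟩
    have hpq : (p : ℕ) + 1 = (q : ℕ) := by simp [p, q]; omega
    have hps : p.succ = i := by apply Fin.ext; simp [p, Fin.val_succ]; omega
    have hqs : q.succ = j := by apply Fin.ext; simp [q, Fin.val_succ]; omega
    have hnp : ¬ ((p : ℕ) < (m : ℕ)) := by simp [p]; omega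
    have hnq : ¬ ((q : ℕ) < (m : ℕ)) := by simp [q]; omega
    constructor
    · exact ⟨p, q, hpq, by simp [rackFaceAct, hnp, hnq, hps, hqs, hxe]⟩
    · exact ⟨p, q, hpq, by simp [rackFaceDel, hnp, hnq, hps, hqs, hxe]⟩
  · -- m > i, m ≠ j hence m > j : the equal pair sits at positions i, i+1
    have hmj' : (j : ℕ) < (m : ℕ) := by omega
    have h1 : (i : ℕ) < n := by omega
    have h2 : (i : ℕ) + 1 < n := by omega
    set p : Fin n := ⟨(i : ℕ), h1⟩
    set q : Fin n := ⟨(i : ℕ) + 1, h2⟩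
    have hpq : (p : ℕ) + 1 = (q : ℕ) := by simp [p, q]
    have hpc : p.castSucc = i := by apply Fin.ext; simp [p]
    have hqc : q.castSucc = j := by apply Fin.ext; simp [q]; omega
    have hyp : ((p : ℕ) < (m : ℕ)) := by simp [p]; omega
    have hyq : ((q : ℕ) < (m : ℕ)) := by simp [q]; omega
    constructor
    · exact ⟨p, q, hpq, by simp [rackFaceAct, hyp, hyq, hpc, hqc, hxe]⟩
    · exact ⟨p, q, hpq, by simp [rackFaceDel, hyp, hyq, hpc, hqc, hxe]⟩

lemma rackTerm_mem (X : Type*) [Quandle X] (n : ℕ) (x : Fin (n + 1) → X)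
    (hx : x ∈ degTuple (n + 1)) : rackTerm X n x ∈ degSubmodule X n := by
  obtain ⟨i, j, hij, hxe⟩ := hx
  have hjlt := j.isLt
  have hijne : i ≠ j := by intro h; rw [h] at hij; omega
  -- the i-th and j-th faces agree
  have hA : rackFaceAct x i = rackFaceAct x j := by
    funext p
    simp only [rackFaceAct]
    rcases lt_trichotomy (p : ℕ) (i : ℕ) with h | h | h
    · rw [if_pos h, if_pos (by omega), hxe]
    · rw [if_neg (by omega), if_pos (by omega)]
      have hps : p.succ = j := by apply Fin.ext; simp [Fin.val_succ]; omega
      have hpc : p.castSucc = i := by apply Fin.ext; simp; omega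
      rw [hps, hpc, ← hxe]
      exact Quandle.fix.symm
    · rw [if_neg (by omega), if_neg (by omega)]
  have hD : rackFaceDel x i = rackFaceDel x j := by
    funext p
    simp only [rackFaceDel]
    rcases lt_trichotomy (p : ℕ) (i : ℕ) with h | h | h
    · rw [if_pos h, if_pos (by omega)]
    · rw [if_neg (by omega), if_pos (by omega)]
      have hps : p.succ = j := by apply Fin.ext; simp [Fin.val_succ]; omega
      have hpc : p.castSucc = i := by apply Fin.ext; simp; omega
      rw [hps, hpc, hxe]
    · rw [if_neg (by omega), if_neg (by omega)]
  unfold rackTerm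
  set F : Fin (n + 1) → (Fin n → X) →₀ ℤ := fun m =>
    ((-1 : ℤ) ^ ((m : ℕ) + 1)) •
      (Finsupp.single (rackFaceAct x m) 1 - Finsupp.single (rackFaceDel x m) 1) with hF
  rw [← Finset.sum_sdiff (Finset.subset_univ ({i, j} : Finset (Fin (n + 1)))),
    Finset.sum_pair hijne]
  have hz : F i + F j = 0 := by
    have hj' : (j : ℕ) = (i : ℕ) + 1 := hij.symm
    rw [hF]
    simp only [← hA, ← hD, hj', pow_succ ((-1 : ℤ)) ((i : ℕ) + 1), mul_neg_one, neg_smul]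
    exact add_neg_cancel _
  rw [hz, add_zero]
  apply Submodule.sum_mem
  intro m hm
  simp only [Finset.mem_sdiff, Finset.mem_insert, Finset.mem_singleton] at hm
  have hmi : (m : ℕ) ≠ (i : ℕ) := fun h => hm.2 (Or.inl (Fin.ext h))
  have hmj : (m : ℕ) ≠ (j : ℕ) := fun h => hm.2 (Or.inr (Fin.ext h))
  obtain ⟨hdA, hdD⟩ := deg_faces x i j m hij hxe hmi hmj
  refine Submodule.smul_mem _ _ (Submodule.sub_mem _ ?_ ?_)
  · exact Submodule.subset_span ⟨rackFaceAct x m, hdA, rfl⟩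
  · exact Submodule.subset_span ⟨rackFaceDel x m, hdD, rfl⟩

/-- the degenerate chains form a subcomplex of the rack complex of a
quandle: `∂ᴿ(Cₙᴰ(X)) ⊆ C_{n−1}ᴰ(X)`. -/
theorem stmt9 (X : Type*) [Quandle X] (n : ℕ) (f : (Fin (n + 1) → X) →₀ ℤ)
    (hf : f ∈ degSubmodule X (n + 1)) :
    rackBoundary X n f ∈ degSubmodule X n := by
  have hT : rackBoundary X n f = Finsupp.linearCombination ℤ (rackTerm X n) f := by
    rw [Finsupp.linearCombination_apply]; rfl
  rw [hT]
  have hmap : Finsupp.linearCombination ℤ (rackTerm X n) f ∈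
      (degSubmodule X (n + 1)).map (Finsupp.linearCombination ℤ (rackTerm X n)) :=
    Submodule.mem_map_of_mem hf
  rw [degSubmodule, Submodule.map_span] at hmap
  refine Submodule.span_le.mpr ?_ hmap
  rintro g ⟨g', ⟨y, hy, rfl⟩, rfl⟩
  rw [Finsupp.linearCombination_single, one_smul]
  exact rackTerm_mem X n y hy
end

section
/- For coprime integers n, m ≥ 2, the group G = ⟨x, y | xⁿ = yᵐ⟩ has center Z generated by xⁿ, Z ≅ ℤ, and G/Z is isomorphic to the free product ℤ/n * ℤ/m. -/
open Monoid
open scoped Monoid.Coprod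



/-- The torus knot group `⟨x, y | xⁿ = yᵐ⟩`. -/
def torusRels (n m : ℕ) : Set (FreeGroup (Fin 2)) :=
  {FreeGroup.of 0 ^ n * (FreeGroup.of 1 ^ m)⁻¹}


theorem centerCoprodI_eq_one {G : Bool → Type*} [∀ b, Group (G b)] [∀ b, Nontrivial (G b)]
    [∀ b, DecidableEq (G b)] {g : CoprodI G} (hg : g ∈ Subgroup.center (CoprodI G)) :
    g = 1 := by
  by_contra hg1
  have hw : CoprodI.Word.equiv g ≠ CoprodI.Word.empty := by
    intro h
    apply hg1
    have := congrArg CoprodI.Word.equiv.symm h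
    rwa [Equiv.symm_apply_apply] at this
  obtain ⟨i, j, w', hw'⟩ := CoprodI.NeWord.of_word _ hw
  have hprod : w'.prod = g := by
    rw [CoprodI.NeWord.prod, hw']
    exact CoprodI.Word.equiv.left_inv g
  obtain ⟨c, hc⟩ := exists_ne (1 : G (!j))
  have hjk : j ≠ !j := (Bool.not_ne_self j).symm
  have hkj : (!j) ≠ j := Bool.not_ne_self j
  set A := (w'.append hjk (CoprodI.NeWord.singleton c hc)).append hkj w'.inv with hA
  have hApr : A.prod = CoprodI.of c := by
    rw [hA, CoprodI.NeWord.append_prod, CoprodI.NeWord.append_prod, CoprodI.NeWord.inv_prod,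
      CoprodI.NeWord.prod_singleton, hprod]
    have := (Subgroup.mem_center_iff.mp hg) (CoprodI.of c)
    rw [← this]
    group
  -- toWords are equal
  have hinj : Function.Injective (CoprodI.Word.prod : CoprodI.Word G → CoprodI G) :=
    CoprodI.Word.equiv.symm.injective
  have htw : A.toWord = (CoprodI.NeWord.singleton c hc).toWord := by
    apply hinj
    rw [← CoprodI.NeWord.prod, ← CoprodI.NeWord.prod, hApr, CoprodI.NeWord.prod_singleton]
  have hlist := congrArg (fun w => w.toList.length) htw
  simp only [hA, CoprodI.NeWord.toWord, CoprodI.NeWord.toList, List.length_append,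
    List.length_singleton] at hlist
  have h1 : 0 < w'.toList.length := List.length_pos_iff.mpr w'.toList_ne_nil
  have h2 : 0 < w'.inv.toList.length := List.length_pos_iff.mpr w'.inv.toList_ne_nil
  omega

section
universe u
variable (A B : Type u) [Group A] [Group B]

instance condGroup : ∀ b : Bool, Group (cond b A B) := fun b => b.rec ‹Group B› ‹Group A›

def coprodToI : A ∗ B →* CoprodI (fun b : Bool => cond b A B) :=
  Coprod.lift (CoprodI.of (M := fun b : Bool => cond b A B) (i := true))
    (CoprodI.of (M := fun b : Bool => cond b A B) (i := false))

def iToCoprod : CoprodI (fun b : Bool => cond b A B) →* A ∗ B :=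
  CoprodI.lift (fun b => b.rec Coprod.inr Coprod.inl)

def coprodEquivI : (A ∗ B) ≃* CoprodI (fun b : Bool => cond b A B) :=
  MonoidHom.toMulEquiv (coprodToI A B) (iToCoprod A B)
    (by
      apply Coprod.hom_ext <;> ext a <;>
        simp only [MonoidHom.comp_apply, MonoidHom.id_apply, coprodToI, iToCoprod,
          Coprod.lift_apply_inl, Coprod.lift_apply_inr]
      · exact CoprodI.lift_of (M := fun b : Bool => cond b A B) (fun b => Bool.rec (motive := fun b => cond b A B →* A ∗ B) Coprod.inr Coprod.inl b) (i := true) a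
      · exact CoprodI.lift_of (M := fun b : Bool => cond b A B) (fun b => Bool.rec (motive := fun b => cond b A B →* A ∗ B) Coprod.inr Coprod.inl b) (i := false) a)
    (by
      apply CoprodI.ext_hom
      intro b
      cases b <;> ext a <;>
        simp only [MonoidHom.comp_apply, MonoidHom.id_apply, coprodToI, iToCoprod]
      · erw [CoprodI.lift_of]
      · erw [CoprodI.lift_of])

variable {A B}

theorem centerCoprod_eq_one [Nontrivial A] [Nontrivial B] [DecidableEq A] [DecidableEq B]
    {g : A ∗ B} (hg : g ∈ Subgroup.center (A ∗ B)) : g = 1 := by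
  haveI : ∀ b : Bool, Nontrivial (cond b A B) := fun b => b.rec ‹Nontrivial B› ‹Nontrivial A›
  haveI : ∀ b : Bool, DecidableEq (cond b A B) := fun b => b.rec ‹DecidableEq B› ‹DecidableEq A›
  have h1 : (coprodEquivI A B) g ∈ Subgroup.center _ := by
    rw [Subgroup.mem_center_iff]
    intro z
    obtain ⟨h, rfl⟩ := (coprodEquivI A B).surjective z
    rw [← map_mul, ← map_mul, (Subgroup.mem_center_iff.mp hg) h]
  have h2 : (coprodEquivI A B) g = 1 := centerCoprodI_eq_one h1
  exact (coprodEquivI A B).injective (by rw [h2, map_one])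
end

namespace TorusAux

/-- Generic: a hom from `Multiplicative (ZMod n)` given an element whose `n`-th power is `1`. -/
def zmodHom (n : ℕ) {Q : Type*} [Group Q] (q : Q) (hq : q ^ (n : ℤ) = 1) :
    Multiplicative (ZMod n) →* Q :=
  AddMonoidHom.toMultiplicativeLeft
    (ZMod.lift n ⟨MonoidHom.toAdditiveRight (zpowersHom Q q), by
      rw [MonoidHom.coe_toAdditiveRight]
      simp only [Function.comp_apply, zpowersHom_apply, toAdd_ofAdd, ofMul_eq_zero]
      exact hq⟩)

theorem zmodHom_apply (n : ℕ) {Q : Type*} [Group Q] (q : Q) (hq : q ^ (n : ℤ) = 1) :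
    zmodHom n q hq (Multiplicative.ofAdd (1 : ZMod n)) = q := by
  rw [zmodHom, AddMonoidHom.coe_toMultiplicativeLeft]
  simp only [Function.comp_apply, toAdd_ofAdd]
  rw [show ((1 : ZMod n)) = (((1 : ℤ) : ZMod n)) by push_cast; rfl, ZMod.lift_coe]
  rw [MonoidHom.coe_toAdditiveRight]
  simp

variable (n m : ℕ)

local notation "GG" => PresentedGroup (torusRels n m)
local notation "xx" => (PresentedGroup.of 0 : PresentedGroup (torusRels n m))
local notation "yy" => (PresentedGroup.of 1 : PresentedGroup (torusRels n m))
local notation "CC" => Coprod (Multiplicative (ZMod n)) (Multiplicative (ZMod m))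

theorem rel : xx ^ n = yy ^ m := by
  have h : PresentedGroup.mk (torusRels n m) (FreeGroup.of 0 ^ n * (FreeGroup.of 1 ^ m)⁻¹) = 1 := by
    apply (QuotientGroup.eq_one_iff _).mpr
    exact Subgroup.subset_normalClosure rfl
  rw [map_mul, map_pow, map_inv, map_pow, mul_inv_eq_one] at h
  exact h

theorem xn_central : xx ^ n ∈ Subgroup.center GG := by
  rw [Subgroup.mem_center_iff]
  intro g
  have hg : g ∈ Subgroup.centralizer {xx ^ n} := by
    apply PresentedGroup.generated_by
    intro j
    rw [Subgroup.mem_centralizer_iff]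
    rintro h (rfl : h = xx ^ n)
    fin_cases j
    · show xx ^ n * xx = xx * xx ^ n
      rw [← pow_succ, ← pow_succ']
    · show xx ^ n * yy = yy * xx ^ n
      rw [rel, ← pow_succ, ← pow_succ']
  exact ((Subgroup.mem_centralizer_iff.mp hg) _ rfl).symm

theorem key1 : (Coprod.inl (Multiplicative.ofAdd (1 : ZMod n)) : CC) ^ n = 1 := by
  rw [← map_pow, ← ofAdd_nsmul]
  simp [ZMod.natCast_self]

theorem key2 : (Coprod.inr (Multiplicative.ofAdd (1 : ZMod m)) : CC) ^ m = 1 := by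
  rw [← map_pow, ← ofAdd_nsmul]
  simp [ZMod.natCast_self]

theorem relcheck : ∀ r ∈ torusRels n m,
    FreeGroup.lift (![Coprod.inl (Multiplicative.ofAdd (1 : ZMod n)),
      Coprod.inr (Multiplicative.ofAdd (1 : ZMod m))] : Fin 2 → CC) r = 1 := by
  rintro r (rfl : r = _)
  rw [map_mul, map_pow, map_inv, map_pow, FreeGroup.lift_apply_of, FreeGroup.lift_apply_of]
  simp only [Matrix.cons_val_zero, Matrix.cons_val_one, Matrix.head_cons]
  rw [key1, key2]
  simp

def phi : GG →* CC := PresentedGroup.toGroup (relcheck n m)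

@[simp] theorem phi_x : phi n m xx = Coprod.inl (Multiplicative.ofAdd (1 : ZMod n)) := by
  simp [phi]

@[simp] theorem phi_y : phi n m yy = Coprod.inr (Multiplicative.ofAdd (1 : ZMod m)) := by
  simp [phi]

theorem phi_surj (hn : 2 ≤ n) (hm : 2 ≤ m) : Function.Surjective (phi n m) := by
  haveI : NeZero n := ⟨by omega⟩
  haveI : NeZero m := ⟨by omega⟩
  intro c
  induction c using Coprod.induction_on with
  | inl a =>
    refine ⟨xx ^ (a.toAdd.val), ?_⟩
    rw [map_pow, phi_x, ← map_pow, ← ofAdd_nsmul]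
    congr 1
    rw [nsmul_eq_mul, mul_one, ZMod.natCast_val, ZMod.cast_id]
    rfl
  | inr a =>
    refine ⟨yy ^ (a.toAdd.val), ?_⟩
    rw [map_pow, phi_y, ← map_pow, ← ofAdd_nsmul]
    congr 1
    rw [nsmul_eq_mul, mul_one, ZMod.natCast_val, ZMod.cast_id]
    rfl
  | mul c d hc hd =>
    obtain ⟨g, rfl⟩ := hc
    obtain ⟨g', rfl⟩ := hd
    exact ⟨g * g', map_mul _ _ _⟩

instance N_normal : (Subgroup.zpowers (xx ^ n)).Normal := by
  constructor
  intro a ha g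
  have hc : a ∈ Subgroup.center GG := Subgroup.zpowers_le.mpr (xn_central n m) ha
  rwa [Subgroup.mem_center_iff.mp hc g, mul_assoc, mul_inv_cancel, mul_one]

theorem mkx_pow : ((QuotientGroup.mk xx : GG ⧸ Subgroup.zpowers (xx ^ n))) ^ (n : ℤ) = 1 := by
  rw [← QuotientGroup.mk_zpow, zpow_natCast, QuotientGroup.eq_one_iff]
  exact Subgroup.mem_zpowers _

theorem mky_pow : ((QuotientGroup.mk yy : GG ⧸ Subgroup.zpowers (xx ^ n))) ^ (m : ℤ) = 1 := by
  rw [← QuotientGroup.mk_zpow, zpow_natCast, QuotientGroup.eq_one_iff, ← rel]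
  exact Subgroup.mem_zpowers _

def psi : CC →* GG ⧸ Subgroup.zpowers (xx ^ n) :=
  Coprod.lift (zmodHom n _ (mkx_pow n m)) (zmodHom m _ (mky_pow n m))

theorem psi_phi : (psi n m).comp (phi n m) =
    QuotientGroup.mk' (Subgroup.zpowers (xx ^ n)) := by
  apply PresentedGroup.ext
  intro i
  fin_cases i
  · show psi n m (phi n m xx) = _
    rw [phi_x]
    show Coprod.lift _ _ (Coprod.inl _) = _
    rw [Coprod.lift_apply_inl, zmodHom_apply]
    rfl
  · show psi n m (phi n m yy) = _
    rw [phi_y]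
    show Coprod.lift _ _ (Coprod.inr _) = _
    rw [Coprod.lift_apply_inr, zmodHom_apply]
    rfl

theorem ker_phi : (phi n m).ker = Subgroup.zpowers (xx ^ n) := by
  apply le_antisymm
  · intro g hg
    have h2 := DFunLike.congr_fun (psi_phi n m) g
    rw [MonoidHom.comp_apply, MonoidHom.mem_ker.mp hg, map_one] at h2
    have h3 : (QuotientGroup.mk g : GG ⧸ Subgroup.zpowers (xx ^ n)) = 1 := h2.symm
    exact (QuotientGroup.eq_one_iff g).mp h3
  · rw [Subgroup.zpowers_le, MonoidHom.mem_ker, map_pow, phi_x]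
    exact key1 n m

theorem center_eq (hn : 2 ≤ n) (hm : 2 ≤ m) :
    Subgroup.center GG = Subgroup.zpowers (xx ^ n) := by
  haveI : Fact (1 < n) := ⟨by omega⟩
  haveI : Fact (1 < m) := ⟨by omega⟩
  apply le_antisymm
  · intro g hg
    rw [← ker_phi n m, MonoidHom.mem_ker]
    apply centerCoprod_eq_one
    rw [Subgroup.mem_center_iff]
    intro z
    obtain ⟨h, rfl⟩ := phi_surj n m hn hm z
    rw [← map_mul, ← map_mul, Subgroup.mem_center_iff.mp hg h]
  · rw [Subgroup.zpowers_le]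
    exact xn_central n m

theorem thetacheck : ∀ r ∈ torusRels n m,
    FreeGroup.lift (![Multiplicative.ofAdd (m : ℤ), Multiplicative.ofAdd (n : ℤ)]) r = 1 := by
  rintro r (rfl : r = _)
  rw [map_mul, map_pow, map_inv, map_pow, FreeGroup.lift_apply_of, FreeGroup.lift_apply_of]
  simp only [Matrix.cons_val_zero, Matrix.cons_val_one, Matrix.head_cons]
  rw [← ofAdd_nsmul, ← ofAdd_nsmul, nsmul_eq_mul, nsmul_eq_mul]
  rw [mul_comm ((n : ℕ) : ℤ) (m : ℤ)]
  simp

def theta : GG →* Multiplicative ℤ := PresentedGroup.toGroup (thetacheck n m)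

theorem not_finOrder (hn : 2 ≤ n) (hm : 2 ≤ m) : ¬ IsOfFinOrder (xx ^ n) := by
  intro hfin
  obtain ⟨k, hk, hek⟩ := isOfFinOrder_iff_pow_eq_one.mp hfin
  have h := congrArg (theta n m) hek
  rw [map_one, ← pow_mul, map_pow] at h
  have hx : theta n m xx = Multiplicative.ofAdd (m : ℤ) := by simp [theta]
  rw [hx, ← ofAdd_nsmul] at h
  have h0 : ((n * k : ℕ) : ℤ) * (m : ℤ) = 0 := by
    have h' := congrArg Multiplicative.toAdd h
    simp only [toAdd_ofAdd, toAdd_one] at h'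
    rwa [nsmul_eq_mul] at h'
  have hn0 : (0 : ℤ) < (n : ℕ) := by exact_mod_cast (by omega : 0 < n)
  have hm0 : (0 : ℤ) < (m : ℕ) := by exact_mod_cast (by omega : 0 < m)
  have hk0 : (0 : ℤ) < ((n * k : ℕ) : ℤ) := by
    exact_mod_cast Nat.mul_pos (by omega) hk
  exact (mul_pos hk0 hm0).ne' h0

noncomputable def centerEquivInt (hn : 2 ≤ n) (hm : 2 ≤ m) :
    Subgroup.center GG ≃* Multiplicative ℤ := by
  have hinj : Function.Injective (zpowersHom GG (xx ^ n)) := by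
    have h2 : Function.Injective (fun k : ℤ => (xx ^ n) ^ k) :=
      injective_zpow_iff_not_isOfFinOrder.mpr (not_finOrder n m hn hm)
    intro a b hab
    have : (xx ^ n) ^ (a.toAdd) = (xx ^ n) ^ (b.toAdd) := hab
    exact Multiplicative.toAdd.injective (h2 this)
  refine MulEquiv.trans ?_ (MonoidHom.ofInjective hinj).symm
  refine MulEquiv.subgroupCongr ?_
  rw [Subgroup.range_zpowersHom]
  exact center_eq n m hn hm

noncomputable def quotientEquiv (hn : 2 ≤ n) (hm : 2 ≤ m) :
    (GG ⧸ Subgroup.center GG) ≃* CC := by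
  refine MulEquiv.trans (QuotientGroup.quotientMulEquivOfEq (N := (phi n m).ker) ?_) ?_
  · rw [ker_phi]; exact center_eq n m hn hm
  · exact QuotientGroup.quotientKerEquivOfSurjective _ (phi_surj n m hn hm)

end TorusAux

/-- for coprime `n, m ≥ 2`, the group `G = ⟨x, y | xⁿ = yᵐ⟩` has
center `Z = ⟨xⁿ⟩ ≅ ℤ`, and `G/Z ≅ ℤ/n * ℤ/m`. -/
theorem stmt11 (n m : ℕ) (hn : 2 ≤ n) (hm : 2 ≤ m) (h : Nat.Coprime n m) :
    Subgroup.center (PresentedGroup (torusRels n m)) =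
      Subgroup.zpowers ((PresentedGroup.of 0 : PresentedGroup (torusRels n m)) ^ n) ∧
    Nonempty ((Subgroup.center (PresentedGroup (torusRels n m))) ≃* Multiplicative ℤ) ∧
    Nonempty ((PresentedGroup (torusRels n m) ⧸
        Subgroup.center (PresentedGroup (torusRels n m))) ≃*
      Monoid.Coprod (Multiplicative (ZMod n)) (Multiplicative (ZMod m))) := by
  exact ⟨TorusAux.center_eq n m hn hm, ⟨TorusAux.centerEquivInt n m hn hm⟩,
    ⟨TorusAux.quotientEquiv n m hn hm⟩⟩
end

section
/- Let G be a group, M a right ℤ[G]-module, A a trivial G-module, and ψ: Mⁿ → A a multilinear map invariant under the diagonal G-action (ψ(m₁·g, …, mₙ·g) = ψ(m₁, …, mₙ)). On the simplicial complex with C_n = ℤ[(M × G)^{n+1}] and boundary ∂(x₀,…,xₙ) = Σᵢ(−1)ⁱ(x₀,…,x̂ᵢ,…,xₙ), the map Ψ((a₀,g₀), …, (aₙ,gₙ)) = ψ(a₀ − a₁, a₁ − a₂, …, a_{n−1} − aₙ) satisfies Ψ ∘ ∂_{n+1} = 0, i.e., Ψ is an n-cocycle. -/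
private lemma sa_val {m : ℕ} (p : Fin (m + 1)) (t : Fin m) :
    ((p.succAbove t : Fin (m + 1)) : ℕ) = if (t : ℕ) < (p : ℕ) then (t : ℕ) else (t : ℕ) + 1 := by
  rcases lt_or_ge (Fin.castSucc t) p with h | h
  · rw [Fin.succAbove_of_castSucc_lt _ _ h, if_pos (by exact h)]
    simp
  · rw [Fin.succAbove_of_le_castSucc _ _ h, if_neg (by exact not_lt.mpr h)]
    simp

private lemma tele {A : Type*} [AddCommGroup A] (c : ℕ → A) :
    ∀ m, ∑ j ∈ Finset.range (m + 1), ((-1 : ℤ) ^ (j + 1)) • (c (j + 1) + c j)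
      = ((-1 : ℤ) ^ (m + 1)) • c (m + 1) - c 0
  | 0 => by simp [smul_add]; abel
  | m + 1 => by
    rw [Finset.sum_range_succ, tele c m]
    simp [pow_succ, smul_add, mul_smul]
    abel

/-- let `G` be a group, `M` a right `ℤ[G]`-module (given by an additive
right action `smul`), `A` a trivial `G`-module, and `ψ : Mⁿ → A` a multilinear
`G`-invariant map.  Then `Ψ((a₀,g₀),…,(aₙ,gₙ)) = ψ(a₀−a₁, …, a_{n−1}−aₙ)` is an
`n`-cocycle on the simplicial complex `C_n = ℤ[(M × G)^{n+1}]`: it vanishes on the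
boundary of every `(n+1)`-simplex. -/
theorem stmt16 {G : Type*} [Group G] {M A : Type*} [AddCommGroup M] [AddCommGroup A]
    (smul : M → G → M)
    (hadd : ∀ (a b : M) (g : G), smul (a + b) g = smul a g + smul b g)
    (hmulg : ∀ (a : M) (g h : G), smul a (g * h) = smul (smul a g) h)
    (hone : ∀ a : M, smul a 1 = a)
    (n : ℕ) (ψ : (Fin n → M) → A)
    (hlin : ∀ (i : Fin n) (x : Fin n → M) (u v : M),
      ψ (Function.update x i (u + v)) = ψ (Function.update x i u) + ψ (Function.update x i v))
    (hinv : ∀ (x : Fin n → M) (g : G), ψ (fun i => smul (x i) g) = ψ x)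
    (w : Fin (n + 2) → M × G) :
    (∑ i : Fin (n + 2), ((-1 : ℤ) ^ (i : ℕ)) •
      ψ (fun j : Fin n =>
        (w ((i.succAbove j.castSucc))).1 - (w (i.succAbove j.succ)).1)) = 0 := by
  -- abbreviations
  let a : Fin (n + 2) → M := fun k => (w k).1
  let e : Fin (n + 1) → M := fun k => a k.castSucc - a k.succ
  let c : ℕ → A := fun k =>
    if h : k < n + 1 then ψ (fun t => e ((⟨k, h⟩ : Fin (n + 1)).succAbove t)) else 0
  have hcpos : ∀ (k : ℕ) (h : k < n + 1),
      c k = ψ (fun t => e ((⟨k, h⟩ : Fin (n + 1)).succAbove t)) := by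
    intro k h; simp only [c, dif_pos h]
  have hctop : c (n + 1) = 0 := by simp only [c]; rw [dif_neg (by omega)]
  -- the first face
  have h0 : ψ (fun t : Fin n =>
      a ((0 : Fin (n + 2)).succAbove t.castSucc) - a ((0 : Fin (n + 2)).succAbove t.succ))
      = c 0 := by
    rw [hcpos 0 (by omega)]
    congr 1
  -- the later faces
  have hs : ∀ j : Fin (n + 1),
      ψ (fun t : Fin n => a (j.succ.succAbove t.castSucc) - a (j.succ.succAbove t.succ))
        = c ((j : ℕ) + 1) + c (j : ℕ) := by
    intro j
    by_cases hj : (j : ℕ) < n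
    · -- middle faces: the merged slot splits by multilinearity
      set j' : Fin n := ⟨(j : ℕ), hj⟩ with hj'def
      have hv : (j' : ℕ) = (j : ℕ) := rfl
      set x : Fin n → M := fun t => e (j.succAbove t) with hxdef
      have hxj' : x j' = e j'.succ := by
        simp only [hxdef]
        congr 1
        apply Fin.ext
        simp only [sa_val, Fin.val_succ, hv]
        all_goals first | (split_ifs <;> omega) | omega | rfl
      have h1 : (fun t : Fin n =>
          a (j.succ.succAbove t.castSucc) - a (j.succ.succAbove t.succ))
          = Function.update x j' (e j'.castSucc + e j'.succ) := by
        funext t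
        rcases eq_or_ne t j' with ht | ht
        · rw [ht, Function.update_self]
          have e1 : j.succ.succAbove j'.castSucc = j'.castSucc.castSucc := by
            apply Fin.ext
            have h1t := j'.isLt
            simp only [sa_val, Fin.coe_castSucc, Fin.val_succ]
            all_goals first | (split_ifs <;> omega) | omega | rfl
          have e2 : j.succ.succAbove j'.succ = j'.succ.succ := by
            apply Fin.ext
            have h1t := j'.isLt
            simp only [sa_val, Fin.coe_castSucc, Fin.val_succ]
            all_goals first | (split_ifs <;> omega) | omega | rfl
          rw [e1, e2]
          have e3 : (j'.castSucc.succ : Fin (n + 2)) = j'.succ.castSucc :=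
            Fin.succ_castSucc j'
          show a j'.castSucc.castSucc - a j'.succ.succ
            = (a j'.castSucc.castSucc - a j'.castSucc.succ) + (a j'.succ.castSucc - a j'.succ.succ)
          rw [e3]
          abel
        · rw [Function.update_of_ne ht]
          have hne : (t : ℕ) ≠ (j : ℕ) := by
            intro h; exact ht (Fin.ext (by rw [hv, h]))
          have e1 : j.succ.succAbove t.castSucc = (j.succAbove t).castSucc := by
            apply Fin.ext
            simp only [sa_val, Fin.coe_castSucc, Fin.val_succ]
            all_goals first | (split_ifs <;> omega) | omega | rfl
          have e2 : j.succ.succAbove t.succ = (j.succAbove t).succ := by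
            apply Fin.ext
            simp only [sa_val, Fin.coe_castSucc, Fin.val_succ]
            all_goals first | (split_ifs <;> omega) | omega | rfl
          rw [e1, e2]
      have h2 : ∀ (h : (j : ℕ) + 1 < n + 1),
          (fun t : Fin n => e ((⟨(j : ℕ) + 1, h⟩ : Fin (n + 1)).succAbove t))
            = Function.update x j' (e j'.castSucc) := by
        intro h
        funext t
        rcases eq_or_ne t j' with ht | ht
        · rw [ht, Function.update_self]
          congr 1
          apply Fin.ext
          simp only [sa_val, Fin.coe_castSucc, Fin.val_succ]
          all_goals first | (split_ifs <;> omega) | omega | rfl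
        · rw [Function.update_of_ne ht]
          have hne : (t : ℕ) ≠ (j : ℕ) := by
            intro h; exact ht (Fin.ext (by rw [hv, h]))
          simp only [hxdef]
          congr 1
          apply Fin.ext
          simp only [sa_val]
          all_goals first | (split_ifs <;> omega) | omega | rfl
      rw [h1, hlin j' x (e j'.castSucc) (e j'.succ),
        hcpos ((j : ℕ) + 1) (by omega), hcpos (j : ℕ) (by omega), h2 (by omega)]
      simp only [Fin.eta]
      congr 1
      rw [← hxj', Function.update_eq_self, hxdef]
    · -- last face
      have hjn : (j : ℕ) = n := by have := j.isLt; omega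
      have hc1 : c ((j : ℕ) + 1) = 0 := by rw [hjn]; exact hctop
      rw [hc1, zero_add, hcpos (j : ℕ) (by omega)]
      congr 1; funext t
      have e1 : j.succ.succAbove t.castSucc
          = ((⟨(j : ℕ), by omega⟩ : Fin (n + 1)).succAbove t).castSucc := by
        apply Fin.ext
        have h1t := t.isLt
        simp only [sa_val, Fin.coe_castSucc, Fin.val_succ]
        all_goals first | (split_ifs <;> omega) | omega | rfl
      have e2 : j.succ.succAbove t.succ
          = ((⟨(j : ℕ), by omega⟩ : Fin (n + 1)).succAbove t).succ := by
        apply Fin.ext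
        have h1t := t.isLt
        simp only [sa_val, Fin.coe_castSucc, Fin.val_succ]
        all_goals first | (split_ifs <;> omega) | omega | rfl
      rw [e1, e2]
  -- assemble
  have key : ∑ i : Fin (n + 2), ((-1 : ℤ) ^ (i : ℕ)) •
      ψ (fun t : Fin n => a (i.succAbove t.castSucc) - a (i.succAbove t.succ)) = 0 := by
    rw [Fin.sum_univ_succ]
    simp only [Fin.val_zero, pow_zero, one_smul, Fin.val_succ]
    rw [h0]
    have hsum : ∑ i : Fin (n + 1), ((-1 : ℤ) ^ ((i : ℕ) + 1)) •
        ψ (fun t : Fin n => a (i.succ.succAbove t.castSucc) - a (i.succ.succAbove t.succ))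
        = ∑ i : Fin (n + 1), ((-1 : ℤ) ^ ((i : ℕ) + 1)) • (c ((i : ℕ) + 1) + c (i : ℕ)) :=
      Finset.sum_congr rfl (fun i _ => by rw [hs i])
    rw [hsum, Fin.sum_univ_eq_sum_range
      (fun k => ((-1 : ℤ) ^ (k + 1)) • (c (k + 1) + c k)) (n + 1),
      tele c n, hctop]
    simp
  exact key
end
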